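/- arXiv:1507.06910 — 9 statements merged into one kernel-verified Lean document; each statement's English description precedes it below -/
import Mathlib

section
/- Let A ⊆ B be an extension of commutative rings. There is an exact sequence 1 → U(A) → U(B) → 𝓘(A,B) → Pic(A) → Pic(B), where U denotes the group of units, 𝓘(A,B) is the group of invertible A-submodules of B, and Pic denotes the Picard group. Exactness at 𝓘(A,B) means: an invertible A-submodule L of B has trivial class in Pic(A) (i.e., L is a free A-module of rank 1) if and only if L = bA for some unit b of B; the map U(B) → 𝓘(A,B) sends b to the A-submodule bA. -/
namespace Submodule

variable {R A : Type*} [CommSemiring R] [Semiring A] [Algebra R A] [FaithfulSMul R A]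

theorem nonempty_linearEquiv_iff_exists_eq_span_singleton (I : (Submodule R A)ˣ) :
    Nonempty ((I : Submodule R A) ≃ₗ[R] R) ↔ ∃ b : Aˣ, (I : Submodule R A) = span R {(b : A)} := by
  rw [← CommRing.Pic.mk_eq_one_iff, ← unitsToPic_apply, ← MonoidHom.mem_ker, ker_unitsToPic,
    MonoidHom.mem_range]
  simp only [Units.ext_iff, Units.coe_map]
  exact exists_congr fun _ => eq_comm

end Submodule

/-- exactness of `1 → U(A) → U(B) → 𝓘(A,B) → Pic A → Pic B` for a
commutative ring extension `A ⊆ B`.  We record: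
(i) exactness at `U(A)`: `U(A) → U(B)` is injective;
(ii) exactness at `U(B)`: `bA = A` iff `b` comes from a unit of `A`;
(iii) exactness at `𝓘(A,B)` (as the statement specifies): an invertible
`A`-submodule `L` of `B` is free of rank one over `A` (trivial class in `Pic A`)
if and only if `L = bA` for some unit `b` of `B`. -/
theorem stmt_1 {B : Type} [CommRing B] (A : Subring B) :
    (Function.Injective fun u : (↥A)ˣ => (((u : ↥A) : B))) ∧
    (∀ b : Bˣ, Submodule.span A {(b : B)} = 1 ↔
      ∃ u : (↥A)ˣ, ((u : ↥A) : B) = (b : B)) ∧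
    (∀ L : (Submodule A B)ˣ,
      Nonempty ((↥(L : Submodule A B)) ≃ₗ[A] ↥A) ↔
        ∃ b : Bˣ, (L : Submodule A B) = Submodule.span A {(b : B)}) := by
  refine ⟨fun u v h => Units.ext (Subtype.ext h), fun b => ?_,
    Submodule.nonempty_linearEquiv_iff_exists_eq_span_singleton⟩
  rw [Submodule.span_singleton_eq_one_iff]
  exact exists_congr fun _ => eq_comm
end

section
/- Let A ⊆ B be an extension of commutative rings and let 𝔞 be an ideal of B contained in A. Then the natural map 𝓘(A,B) → 𝓘(A/𝔞, B/𝔞) induced by reduction mod 𝔞 is a group isomorphism. -/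
/-!
An invertible `A`-submodule `L` of `B` contains `𝔞`, since `𝔞 = 𝔞 L⁻¹ L ⊆ 𝔞 L ⊆ A L = L`, and a
submodule containing `𝔞 = ker (B → B/𝔞)` is the preimage of its image; this gives injectivity.
For surjectivity, let `K, K'` be the preimages of an invertible `M` and of its inverse. The preimage
of `A/𝔞` is `A + 𝔞 = A`, so `K K' + 𝔞 = A`; multiplying by `𝔞` gives `𝔞 ⊆ 𝔞 K K' + 𝔞 𝔞 ⊆ K K'`,
hence `K K' = A`.
-/

open Submodule

section IdealAsSubmodule

variable {B : Type*} [CommRing B] {A : Subring B} (I : Ideal B)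

lemma Ideal.restrictScalars_mul_le (P : Submodule A B) :
    I.restrictScalars A * P ≤ I.restrictScalars A :=
  Submodule.mul_le.mpr fun _ ht _ _ => I.mul_mem_right _ ht

lemma Ideal.restrictScalars_le_one (hI : (I : Set B) ⊆ A) : I.restrictScalars A ≤ 1 :=
  fun t ht => mem_one.mpr ⟨⟨t, hI ht⟩, rfl⟩

lemma Ideal.restrictScalars_le_of_mul_eq_one (hI : (I : Set B) ⊆ A) {L L' : Submodule A B}
    (h : L' * L = 1) : I.restrictScalars A ≤ L :=
  calc I.restrictScalars A = I.restrictScalars A * (L' * L) := by rw [h, mul_one]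
    _ = I.restrictScalars A * L' * L := (mul_assoc ..).symm
    _ ≤ I.restrictScalars A * L := mul_le_mul_left (I.restrictScalars_mul_le L') L
    _ ≤ 1 * L := mul_le_mul_left (I.restrictScalars_le_one hI) L
    _ = L := one_mul L

lemma Ideal.mul_eq_one_of_mul_sup_restrictScalars_eq_one {K K' : Submodule A B}
    (hK : I.restrictScalars A ≤ K) (hK' : I.restrictScalars A ≤ K')
    (h : K * K' ⊔ I.restrictScalars A = 1) : K * K' = 1 := by
  have hle : I.restrictScalars A ≤ K * K' :=
    calc I.restrictScalars A = I.restrictScalars A * (K * K' ⊔ I.restrictScalars A) := by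
          rw [h, mul_one]
      _ = I.restrictScalars A * K * K' ⊔ I.restrictScalars A * I.restrictScalars A := by
          rw [Submodule.mul_sup, mul_assoc]
      _ ≤ K * K' := sup_le (mul_le_mul_left ((I.restrictScalars_mul_le K).trans hK) K')
          (mul_le_mul' hK hK')
  rwa [sup_eq_left.mpr hle] at h

end IdealAsSubmodule

namespace Subring

variable {B : Type*} [CommRing B] (A : Subring B) (I : Ideal B)

noncomputable def quotientMkRestrict : A →+* A.map (Ideal.Quotient.mk I) :=
  (Ideal.Quotient.mk I).restrict A _ fun a ha => ⟨a, ha, rfl⟩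

lemma quotientMkRestrict_surjective : Function.Surjective (quotientMkRestrict A I) := by
  rintro ⟨_, a, ha, rfl⟩
  exact ⟨⟨a, ha⟩, rfl⟩

noncomputable instance : RingHomSurjective (quotientMkRestrict A I) :=
  ⟨quotientMkRestrict_surjective A I⟩

noncomputable def quotientMkₛₗ : B →ₛₗ[quotientMkRestrict A I] B ⧸ I where
  toFun := Ideal.Quotient.mk I
  map_add' := map_add _
  map_smul' _ _ := map_mul _ _ _

lemma quotientMkₛₗ_surjective : Function.Surjective (quotientMkₛₗ A I) :=
  Ideal.Quotient.mk_surjective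

lemma ker_quotientMkₛₗ : LinearMap.ker (quotientMkₛₗ A I) = I.restrictScalars A := by
  ext x
  exact Ideal.Quotient.eq_zero_iff_mem

lemma map_quotientMkₛₗ_mul (M N : Submodule A B) :
    (M * N).map (quotientMkₛₗ A I) = M.map (quotientMkₛₗ A I) * N.map (quotientMkₛₗ A I) := by
  conv_lhs => rw [← span_eq M, ← span_eq N, span_mul_span, map_span]
  rw [← span_eq (M.map _), ← span_eq (N.map _), span_mul_span, map_coe, map_coe]
  exact congrArg _ (Set.image_mul (Ideal.Quotient.mk I))

lemma map_quotientMkₛₗ_one : (1 : Submodule A B).map (quotientMkₛₗ A I) = 1 := by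
  rw [one_eq_span, map_span, Set.image_singleton, one_eq_span]
  rfl

lemma comap_quotientMkₛₗ_one (hI : (I : Set B) ⊆ A) :
    (1 : Submodule (A.map (Ideal.Quotient.mk I)) (B ⧸ I)).comap (quotientMkₛₗ A I) = 1 := by
  ext x
  rw [Submodule.mem_comap, mem_one, mem_one]
  constructor
  · rintro ⟨⟨_, a, ha, rfl⟩, hax⟩
    have hxa : x - a ∈ I := Ideal.Quotient.eq.mp hax.symm
    exact ⟨⟨x, by simpa using A.add_mem ha (hI hxa)⟩, rfl⟩
  · rintro ⟨a, rfl⟩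
    exact ⟨quotientMkRestrict A I a, rfl⟩

noncomputable def reduceModIdeal :
    Submodule A B →* Submodule (A.map (Ideal.Quotient.mk I)) (B ⧸ I) where
  toFun L := L.map (quotientMkₛₗ A I)
  map_one' := map_quotientMkₛₗ_one A I
  map_mul' := map_quotientMkₛₗ_mul A I

lemma restrictScalars_le_comap_quotientMkₛₗ
    (M : Submodule (A.map (Ideal.Quotient.mk I)) (B ⧸ I)) :
    I.restrictScalars A ≤ M.comap (quotientMkₛₗ A I) :=
  ker_quotientMkₛₗ A I ▸ LinearMap.ker_le_comap _

lemma comap_reduceModIdeal {L : Submodule A B} (hL : I.restrictScalars A ≤ L) :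
    (reduceModIdeal A I L).comap (quotientMkₛₗ A I) = L := by
  rw [reduceModIdeal, MonoidHom.coe_mk, OneHom.coe_mk, Submodule.comap_map_eq, ker_quotientMkₛₗ,
    sup_eq_left.mpr hL]

lemma units_map_reduceModIdeal_injective (hI : (I : Set B) ⊆ A) :
    Function.Injective (Units.map (reduceModIdeal A I)) := by
  intro u v huv
  rw [Units.ext_iff, Units.coe_map, Units.coe_map] at huv
  apply Units.ext
  rw [← comap_reduceModIdeal A I (I.restrictScalars_le_of_mul_eq_one hI u.inv_mul), huv,
    comap_reduceModIdeal A I (I.restrictScalars_le_of_mul_eq_one hI v.inv_mul)]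

lemma units_map_reduceModIdeal_surjective (hI : (I : Set B) ⊆ A) :
    Function.Surjective (Units.map (reduceModIdeal A I)) := by
  intro M
  set K := (M : Submodule _ (B ⧸ I)).comap (quotientMkₛₗ A I)
  set K' := ((M⁻¹ : (Submodule _ (B ⧸ I))ˣ) : Submodule _ (B ⧸ I)).comap (quotientMkₛₗ A I)
  have hmap : ∀ N, reduceModIdeal A I (N.comap (quotientMkₛₗ A I)) = N :=
    map_comap_eq_of_surjective (quotientMkₛₗ_surjective A I)
  have hKK' : K * K' = 1 := by
    refine I.mul_eq_one_of_mul_sup_restrictScalars_eq_one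
      (restrictScalars_le_comap_quotientMkₛₗ A I _)
      (restrictScalars_le_comap_quotientMkₛₗ A I _) ?_
    rw [← ker_quotientMkₛₗ, ← Submodule.comap_map_eq]
    change (reduceModIdeal A I (K * K')).comap _ = 1
    rw [map_mul, hmap, hmap, M.mul_inv, comap_quotientMkₛₗ_one A I hI]
  exact ⟨Units.mkOfMulEqOne K K' hKK', Units.ext (hmap _)⟩

end Subring

/-- let `A ⊆ B` be a commutative ring extension and `𝔞` an ideal of `B`
contained in `A`.  Then reduction mod `𝔞` induces a group isomorphism
`𝓘(A,B) ≅ 𝓘(A/𝔞, B/𝔞)`, sending an invertible `A`-submodule `L` of `B` to its image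
in `B/𝔞`. -/
theorem stmt_5 {B : Type} [CommRing B] (A : Subring B) (I : Ideal B)
    (hI : (I : Set B) ⊆ (A : Set B)) :
    ∃ e : (Submodule A B)ˣ ≃* (Submodule (A.map (Ideal.Quotient.mk I)) (B ⧸ I))ˣ,
      ∀ L : (Submodule A B)ˣ,
        ((e L : Submodule (A.map (Ideal.Quotient.mk I)) (B ⧸ I)) : Set (B ⧸ I)) =
          (Ideal.Quotient.mk I) '' ((L : Submodule A B) : Set B) :=
  ⟨MulEquiv.ofBijective (Units.map (A.reduceModIdeal I))
    ⟨A.units_map_reduceModIdeal_injective I hI, A.units_map_reduceModIdeal_surjective I hI⟩,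
    fun _ => map_coe _ _⟩
end

section
/- Let A = ∏ᵢ₌₁ⁿ Aᵢ and B = ∏ᵢ₌₁ⁿ Bᵢ be finite products of commutative rings, where each Aᵢ is a subring of Bᵢ. Then the natural map 𝓘(A,B) → ∏ᵢ 𝓘(Aᵢ,Bᵢ) is a group isomorphism. -/
/-- The product subring `∏ᵢ Aᵢ` of `∏ᵢ Bᵢ`. -/
def SubringPi {n : ℕ} {B : Fin n → Type} [∀ i, CommRing (B i)]
    (A : ∀ i, Subring (B i)) : Subring (∀ i, B i) where
  carrier := {f | ∀ i, f i ∈ A i}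
  one_mem' := fun i => (A i).one_mem
  zero_mem' := fun i => (A i).zero_mem
  mul_mem' := fun hf hg i => (A i).mul_mem (hf i) (hg i)
  add_mem' := fun hf hg i => (A i).add_mem (hf i) (hg i)
  neg_mem' := fun hf i => (A i).neg_mem (hf i)

/-!
Every `A`-submodule `M` of `B` is the product of its projections `Mᵢ`: if `f i = g i` with
`g ∈ M`, then `Pi.single i (f i) = Pi.single i 1 • g ∈ M`, and `f = ∑ᵢ Pi.single i (f i)`.
The same idempotents show that the product of the `Pᵢ * Qᵢ` is `(∏ Pᵢ) * (∏ Qᵢ)`. Hence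
`M ↦ (Mᵢ)` is a monoid isomorphism between the submodule monoids, and so restricts to an
isomorphism between their unit groups, the groups of invertible submodules.
-/

lemma Pi.single_apply_mem {ι : Type*} [DecidableEq ι] {M : ι → Type*} [∀ i, Zero (M i)]
    {S : ∀ i, Set (M i)} (h0 : ∀ j, 0 ∈ S j) {i : ι} {x : M i} (hx : x ∈ S i) (j : ι) :
    Pi.single i x j ∈ S j := by
  rcases eq_or_ne j i with rfl | h
  · simpa using hx
  · simpa [h] using h0 j

namespace SubringPi

variable {n : ℕ} {B : Fin n → Type} [∀ i, CommRing (B i)] (A : ∀ i, Subring (B i))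

lemma single_mem {i : Fin n} {x : B i} (hx : x ∈ A i) : Pi.single i x ∈ SubringPi A :=
  Pi.single_apply_mem (S := fun j => (A j : Set (B j))) (fun j => (A j).zero_mem) hx

def submodulePi (N : ∀ i, Submodule (A i) (B i)) : Submodule (SubringPi A) (∀ i, B i) where
  carrier := {f | ∀ i, f i ∈ N i}
  add_mem' hf hg i := (N i).add_mem (hf i) (hg i)
  zero_mem' i := (N i).zero_mem
  smul_mem' a _ hf i := (N i).smul_mem ⟨a.1 i, a.2 i⟩ (hf i)

def submoduleProj (M : Submodule (SubringPi A) (∀ i, B i)) (i : Fin n) :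
    Submodule (A i) (B i) where
  carrier := (fun f : ∀ j, B j => f i) '' (M : Set (∀ j, B j))
  add_mem' := by
    rintro _ _ ⟨f, hf, rfl⟩ ⟨g, hg, rfl⟩
    exact ⟨f + g, M.add_mem hf hg, rfl⟩
  zero_mem' := ⟨0, M.zero_mem, rfl⟩
  smul_mem' a := by
    rintro _ ⟨f, hf, rfl⟩
    refine ⟨(⟨Pi.single i (a : B i), single_mem A a.2⟩ : SubringPi A) • f, M.smul_mem _ hf, ?_⟩
    simp [Subring.smul_def]

variable {A}

lemma single_mem_submodulePi {N : ∀ i, Submodule (A i) (B i)} {i : Fin n} {x : B i}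
    (hx : x ∈ N i) : Pi.single i x ∈ submodulePi A N :=
  Pi.single_apply_mem (S := fun j => (N j : Set (B j))) (fun j => (N j).zero_mem) hx

lemma single_mem_of_apply_mem {M : Submodule (SubringPi A) (∀ i, B i)} {f : ∀ i, B i}
    (hf : f ∈ M) (i : Fin n) : Pi.single i (f i) ∈ M := by
  have h := M.smul_mem (⟨Pi.single i 1, single_mem A (A i).one_mem⟩ : SubringPi A) hf
  change Pi.single i 1 * f ∈ M at h
  rwa [← Pi.single_mul_left, one_mul] at h

variable (A)

lemma submoduleProj_submodulePi (N : ∀ i, Submodule (A i) (B i)) :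
    submoduleProj A (submodulePi A N) = N := by
  funext i
  ext x
  refine ⟨?_, fun hx => ⟨Pi.single i x, single_mem_submodulePi hx, Pi.single_eq_same i x⟩⟩
  rintro ⟨f, hf, rfl⟩
  exact hf i

lemma submodulePi_submoduleProj (M : Submodule (SubringPi A) (∀ i, B i)) :
    submodulePi A (submoduleProj A M) = M := by
  ext f
  refine ⟨fun hf => ?_, fun hf i => ⟨f, hf, rfl⟩⟩
  choose g hg hgf using hf
  rw [← Finset.univ_sum_single f]
  refine M.sum_mem fun i _ => ?_
  rw [← hgf i]
  exact single_mem_of_apply_mem (hg i) i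

lemma submodulePi_mul (P Q : ∀ i, Submodule (A i) (B i)) :
    submodulePi A (P * Q) = submodulePi A P * submodulePi A Q := by
  refine le_antisymm (fun f hf => ?_) (Submodule.mul_le.2 fun f hf g hg i =>
    Submodule.mul_mem_mul (hf i) (hg i))
  rw [← Finset.univ_sum_single f]
  refine Submodule.sum_mem _ fun i _ => ?_
  refine Submodule.mul_induction_on (C := fun x => Pi.single i x ∈ _) (hf i) ?_ ?_
  · intro p hp q hq
    rw [Pi.single_mul]
    exact Submodule.mul_mem_mul (single_mem_submodulePi hp) (single_mem_submodulePi hq)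
  · intro x y hx hy
    rw [Pi.single_add]
    exact Submodule.add_mem _ hx hy

def submoduleMulEquiv :
    Submodule (SubringPi A) (∀ i, B i) ≃* ∀ i, Submodule (A i) (B i) :=
  MulEquiv.symm
    { toFun := submodulePi A
      invFun := submoduleProj A
      left_inv := submoduleProj_submodulePi A
      right_inv := submodulePi_submoduleProj A
      map_mul' := submodulePi_mul A }

end SubringPi

/-- for finite products `A = ∏ᵢ Aᵢ ⊆ B = ∏ᵢ Bᵢ` of commutative ring
extensions, the natural componentwise map `𝓘(A,B) → ∏ᵢ 𝓘(Aᵢ,Bᵢ)` is a group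
isomorphism. -/
theorem stmt_6 {n : ℕ} {B : Fin n → Type} [∀ i, CommRing (B i)]
    (A : ∀ i, Subring (B i)) :
    ∃ e : (Submodule (SubringPi A) (∀ i, B i))ˣ ≃* (∀ i, (Submodule (A i) (B i))ˣ),
      ∀ (M : (Submodule (SubringPi A) (∀ i, B i))ˣ) (i : Fin n),
        ((e M i : Submodule (A i) (B i)) : Set (B i)) =
          (fun f : ∀ j, B j => f i) '' ((M : Submodule (SubringPi A) (∀ i, B i)) : Set (∀ i, B i)) :=
  ⟨(Units.mapEquiv (SubringPi.submoduleMulEquiv A)).trans MulEquiv.piUnits, fun _ _ => rfl⟩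
end

section
/- Let A ⊆ B be a filtered union of extensions Aλ ⊆ Bλ (i.e., A = ⋃λ Aλ, B = ⋃λ Bλ over a directed index set with compatible inclusions). Then 𝓘(A,B) is the filtered colimit of the groups 𝓘(Aλ,Bλ). -/
/-! An invertible `A`-submodule `L` with inverse `L'` is finitely generated, say by `T` and `T'`,
and `L * L' = 1` amounts to `T * T' ⊆ A` together with `1 ∈ span A (T * T')`. These involve
finitely many elements of `B` and finitely many coefficients from `A`, so they already hold at
some level `λ`, where `T` spans an invertible `Aλ`-submodule of `Bλ`. In the same way an equality
of the `A`-spans of two finite sets needs only finitely many coefficients from `A`, hence holds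
over some `Aμ`. -/

open Filter Submodule
open scoped Pointwise

namespace Submodule

theorem span_span_of_le {B : Type*} [CommRing B] {R₁ R₂ : Subring B} (h : R₁ ≤ R₂)
    (s : Set B) :
    span R₂ (span R₁ s : Set B) = span R₂ s :=
  letI := (Subring.inclusion h).toAlgebra
  haveI : IsScalarTower R₁ R₂ B := .of_algebraMap_eq fun _ => rfl
  span_span_of_tower R₁ R₂ s

theorem span_mul_span_eq_one_of_subset {B : Type*} [CommRing B] {R : Subring B} {s t : Set B}
    (hst : s * t ⊆ R) (h1 : (1 : B) ∈ span R (s * t)) : span R s * span R t = 1 := by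
  rw [span_mul_span]
  exact le_antisymm (span_le.2 fun x hx => mem_one.2 ⟨⟨x, hst hx⟩, rfl⟩) (one_le.2 h1)

theorem exists_unit_map_eq {R S T : Type*} [CommSemiring R] [CommSemiring S] [CommSemiring T]
    [Algebra R S] [Algebra R T] (f : S →ₐ[R] T) (hf : Function.Injective f)
    {P Q : Submodule R T} (hP : P ≤ LinearMap.range f.toLinearMap)
    (hQ : Q ≤ LinearMap.range f.toLinearMap) (h : P * Q = 1) :
    ∃ M : (Submodule R S)ˣ, (M : Submodule R S).map f.toLinearMap = P := by
  have hPQ : P.comap f.toLinearMap * Q.comap f.toLinearMap = 1 :=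
    map_injective_of_injective hf <| by
      rw [Submodule.map_mul _ _ f, Submodule.map_one f, map_comap_eq_of_le hP,
        map_comap_eq_of_le hQ, h]
  exact ⟨.mkOfMulEqOne _ _ hPQ, map_comap_eq_of_le hP⟩

end Submodule

section DirectedUnion

variable {B ι : Type*} [CommRing B] [Preorder ι] [IsDirected ι (· ≤ ·)] [Nonempty ι]
  {R : ι → Subring B}

theorem Subring.eventually_mem_of_mem_iSup (hR : Monotone R) {x : B} (hx : x ∈ ⨆ i, R i) :
    ∀ᶠ i in atTop, x ∈ R i :=
  let ⟨i, hi⟩ := (Subring.mem_iSup_of_directed hR.directed_le).1 hx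
  (eventually_ge_atTop i).mono fun _ hij => hR hij hi

theorem Subring.eventually_subset_of_subset_iSup (hR : Monotone R) {s : Set B} (hs : s.Finite)
    (h : s ⊆ (⨆ i, R i : Subring B)) : ∀ᶠ i in atTop, s ⊆ R i :=
  (eventually_all_finite hs).2 fun _ hx => eventually_mem_of_mem_iSup hR (h hx)

namespace Submodule

theorem eventually_mem_span_of_mem_span_iSup (hR : Monotone R) {t : Set B} {x : B}
    (hx : x ∈ span (⨆ i, R i : Subring B) t) : ∀ᶠ i in atTop, x ∈ span (R i) t := by
  induction hx using span_induction with
  | mem y hy => exact .of_forall fun _ => subset_span hy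
  | zero => exact .of_forall fun _ => zero_mem _
  | add y z _ _ hy hz => exact (hy.and hz).mono fun _ h => add_mem h.1 h.2
  | smul a y _ hy =>
    exact ((Subring.eventually_mem_of_mem_iSup hR a.2).and hy).mono fun _ h =>
      smul_mem _ ⟨a, h.1⟩ h.2

theorem eventually_subset_span_of_subset_span_iSup (hR : Monotone R) {s t : Set B}
    (hs : s.Finite) (h : s ⊆ span (⨆ i, R i : Subring B) t) :
    ∀ᶠ i in atTop, s ⊆ span (R i) t :=
  (eventually_all_finite hs).2 fun _ hx => eventually_mem_span_of_mem_span_iSup hR (h hx)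

theorem eventually_span_eq_of_span_iSup_eq (hR : Monotone R) {s t : Set B} (hs : s.Finite)
    (ht : t.Finite) (h : span (⨆ i, R i : Subring B) s = span (⨆ i, R i : Subring B) t) :
    ∀ᶠ i in atTop, span (R i) s = span (R i) t := by
  filter_upwards [eventually_subset_span_of_subset_span_iSup hR hs (h ▸ subset_span),
    eventually_subset_span_of_subset_span_iSup hR ht (h.symm ▸ subset_span)] with i hst hts
  exact le_antisymm (span_le.2 hst) (span_le.2 hts)

theorem eventually_span_mul_span_eq_one (hR : Monotone R) {s t : Set B} (hs : s.Finite)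
    (ht : t.Finite) (h : span (⨆ i, R i : Subring B) s * span (⨆ i, R i : Subring B) t = 1) :
    ∀ᶠ i in atTop, span (R i) s * span (R i) t = 1 := by
  rw [span_mul_span] at h
  have hst : s * t ⊆ (⨆ i, R i : Subring B) := fun x hx => by
    obtain ⟨a, rfl⟩ := mem_one.1 (h ▸ subset_span hx)
    exact a.2
  filter_upwards [Subring.eventually_subset_of_subset_iSup hR (hs.mul ht) hst,
    eventually_mem_span_of_mem_span_iSup hR (h ▸ one_le.1 le_rfl)] with i hsti h1
  exact span_mul_span_eq_one_of_subset hsti h1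

end Submodule

end DirectedUnion

/-- if `A ⊆ B` is the filtered union of extensions `Aλ ⊆ Bλ`, then
`𝓘(A,B)` is the filtered colimit of the groups `𝓘(Aλ,Bλ)`.  Concretely:
(i) every invertible `A`-submodule of `B` is extended from some level `λ`, and
(ii) if two invertible submodules at level `i` become equal in `𝓘(A,B)`, then they
become equal at some level `j ≥ i`. -/
theorem stmt_7 {B ι : Type} [CommRing B] [Preorder ι] [IsDirected ι (· ≤ ·)]
    [Nonempty ι] (A : Subring B) (A' B' : ι → Subring B)
    (hmonoA : Monotone A') (hmonoB : Monotone B') (hAB : ∀ i, A' i ≤ B' i)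
    (hA : (⨆ i, A' i) = A) (hB : (⨆ i, B' i) = ⊤) :
    letI : ∀ i, Algebra (A' i) (B' i) := fun i => (Subring.inclusion (hAB i)).toAlgebra
    (∀ L : (Submodule A B)ˣ, ∃ (i : ι) (M : (Submodule (A' i) (B' i))ˣ),
        (L : Submodule A B) =
          Submodule.span A (Subtype.val '' ((M : Submodule (A' i) (B' i)) : Set (B' i)))) ∧
    (∀ (i : ι) (M N : (Submodule (A' i) (B' i))ˣ),
        Submodule.span A (Subtype.val '' ((M : Submodule (A' i) (B' i)) : Set (B' i))) =
          Submodule.span A (Subtype.val '' ((N : Submodule (A' i) (B' i)) : Set (B' i))) →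
        ∃ (j : ι) (hij : i ≤ j),
          Submodule.span (A' j)
              (Subring.inclusion (hmonoB hij) '' ((M : Submodule (A' i) (B' i)) : Set (B' i))) =
            Submodule.span (A' j)
              (Subring.inclusion (hmonoB hij) '' ((N : Submodule (A' i) (B' i)) : Set (B' i)))) := by
  let _ : ∀ i, Algebra (A' i) (B' i) := fun i => (Subring.inclusion (hAB i)).toAlgebra
  have : ∀ i, IsScalarTower (A' i) (B' i) B := fun _ => .of_algebraMap_eq fun _ => rfl
  have hAi (i : ι) : A' i ≤ A := hA ▸ le_iSup A' i
  have hval (i : ι) (M : Submodule (A' i) (B' i)) : Subtype.val '' (M : Set (B' i)) =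
      M.map (IsScalarTower.toAlgHom (A' i) (B' i) B).toLinearMap := by rw [map_coe]; rfl
  refine ⟨fun L => ?_, fun i M N hMN => ?_⟩
  · obtain ⟨T, hT⟩ := fg_unit L
    obtain ⟨T', hT'⟩ := fg_unit L⁻¹
    have hTT' : span (⨆ i, A' i : Subring B) (T : Set B) *
        span (⨆ i, A' i : Subring B) (T' : Set B) = 1 := by
      rw [hA, hT, hT', ← Units.val_mul, mul_inv_cancel, Units.val_one]
    have hBi (s : Finset B) : ∀ᶠ i in atTop, (s : Set B) ⊆ B' i :=
      Subring.eventually_subset_of_subset_iSup hmonoB s.finite_toSet (by simp [hB])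
    obtain ⟨i, hi, hTi, hT'i⟩ := ((eventually_span_mul_span_eq_one hmonoA T.finite_toSet
      T'.finite_toSet hTT').and ((hBi T).and (hBi T'))).exists
    have hrange (s : Set B) (hs : s ⊆ B' i) : span (A' i) s ≤
        LinearMap.range (IsScalarTower.toAlgHom (A' i) (B' i) B).toLinearMap :=
      span_le.2 fun x hx => ⟨⟨x, hs hx⟩, rfl⟩
    obtain ⟨M, hM⟩ :=
      exists_unit_map_eq _ Subtype.val_injective (hrange _ hTi) (hrange _ hT'i) hi
    refine ⟨i, M, ?_⟩
    rw [hval, hM, span_span_of_le (hAi i), hT]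
  · obtain ⟨TM, hTM⟩ := fg_unit M
    obtain ⟨TN, hTN⟩ := fg_unit N
    rw [hval, hval, ← hTM, ← hTN, map_span, map_span, span_span_of_le (hAi i),
      span_span_of_le (hAi i), ← hA] at hMN
    obtain ⟨j, hj, hij⟩ := ((eventually_span_eq_of_span_iSup_eq hmonoA
      (TM.finite_toSet.image _) (TN.finite_toSet.image _) hMN).and (eventually_ge_atTop i)).exists
    refine ⟨j, hij, map_injective_of_injective
      (f := (IsScalarTower.toAlgHom (A' j) (B' j) B).toLinearMap) Subtype.val_injective ?_⟩
    rw [map_span, map_span, Set.image_image, Set.image_image]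
    change span (A' j) (Subtype.val '' (M : Set (B' i))) =
      span (A' j) (Subtype.val '' (N : Set (B' i)))
    rw [hval, hval, ← hTM, ← hTN, map_span, map_span, span_span_of_le (hmonoA hij),
      span_span_of_le (hmonoA hij)]
    exact hj
end

section
/- For any commutative ring A, the sequence 1 → U(A) → U(A[t]) × U(A[t⁻¹]) → U(A[t,t⁻¹]) is exact, where the first map is the diagonal and the second map sends (f,g) to f·g⁻¹ (viewing both in the Laurent polynomial ring). That is, a unit of A[t,t⁻¹] that can be written as f·g⁻¹ with f ∈ U(A[t]) and g ∈ U(A[t⁻¹]) equal to the same unit determines f and g up to a common unit of A. -/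
/-! The image of `A[t]` in `A[t,t⁻¹]` has no coefficients in negative degrees and the image of
`A[t⁻¹]` none in positive degrees, so an element in both images is a constant. A constant unit
of `A[t]` is a unit of `A`. -/

open Polynomial LaurentPolynomial

/-- The embedding of `A[t⁻¹]` (polynomials in `t⁻¹`) into the Laurent polynomial ring
`A[t,t⁻¹]`: first view a polynomial in `A[t]`, then substitute `t ↦ t⁻¹`. -/
noncomputable def toLaurentInv (A : Type) [CommRing A] :
    Polynomial A →+* LaurentPolynomial A :=
  (LaurentPolynomial.invert.toAlgHom.toRingHom).comp Polynomial.toLaurent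

namespace Polynomial

variable {R : Type*}

section Semiring

variable [Semiring R]

@[simp]
theorem coeff_toLaurent_natCast (f : R[X]) (n : ℕ) : (toLaurent f).coeff n = f.coeff n := by
  rw [coeff_toLaurent, ← Nat.castEmbedding_apply (R := ℤ),
    Finsupp.mapDomain_apply Nat.castEmbedding.injective]
  rfl

theorem coeff_toLaurent_of_neg (f : R[X]) {m : ℤ} (hm : m < 0) : (toLaurent f).coeff m = 0 := by
  rw [coeff_toLaurent]
  refine Finsupp.mapDomain_of_notMem_range _ _ ?_
  rintro ⟨n, rfl⟩
  exact (Int.natCast_nonneg n).not_gt hm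

end Semiring

section CommSemiring

variable [CommSemiring R]

theorem eq_C_of_toLaurent_eq_invert {f g : R[X]} (h : toLaurent f = invert (toLaurent g)) :
    f = C (f.coeff 0) := by
  ext (_ | n)
  · simp
  · have hn : -((n + 1 : ℕ) : ℤ) < 0 := by omega
    rw [coeff_C_succ, ← coeff_toLaurent_natCast, h, invert_apply, coeff_toLaurent_of_neg g hn]

theorem toLaurent_eq_invert_toLaurent_iff {f g : R[X]} :
    toLaurent f = invert (toLaurent g) ↔ ∃ a, f = C a ∧ g = C a := by
  refine ⟨fun h ↦ ?_, ?_⟩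
  · have h' : toLaurent g = invert (toLaurent f) := by rw [h, involutive_invert]
    have hf := eq_C_of_toLaurent_eq_invert h
    have hg := eq_C_of_toLaurent_eq_invert h'
    refine ⟨f.coeff 0, hf, hg.trans ?_⟩
    have h0 := congr_arg (fun p : R[T;T⁻¹] ↦ p.coeff 0) h
    simp only [invert_apply, neg_zero] at h0
    rw [← Nat.cast_zero, coeff_toLaurent_natCast, coeff_toLaurent_natCast] at h0
    rw [h0]
  · rintro ⟨a, rfl, rfl⟩
    simp [toLaurent_C]

end CommSemiring

end Polynomial

theorem toLaurentInv_apply (A : Type) [CommRing A] (f : Polynomial A) :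
    toLaurentInv A f = invert (toLaurent f) := rfl

/-- for any commutative ring `A`, the sequence
`1 → U(A) → U(A[t]) × U(A[t⁻¹]) → U(A[t,t⁻¹])` is exact:
(i) the diagonal map `U(A) → U(A[t]) × U(A[t⁻¹])` is injective, and
(ii) a pair `(f,g)` with `f ∈ U(A[t])`, `g ∈ U(A[t⁻¹])` becomes equal in
`U(A[t,t⁻¹])` (i.e. `f·g⁻¹ = 1`) iff `f` and `g` are a common unit of `A`. -/
theorem stmt_8 (A : Type) [CommRing A] :
    (Function.Injective fun a : Aˣ =>
      ((Units.map (Polynomial.C (R := A)).toMonoidHom a,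
        Units.map (Polynomial.C (R := A)).toMonoidHom a) :
          (Polynomial A)ˣ × (Polynomial A)ˣ)) ∧
    (∀ f g : (Polynomial A)ˣ,
      Units.map (Polynomial.toLaurent (R := A)).toMonoidHom f *
          (Units.map (toLaurentInv A).toMonoidHom g)⁻¹ = 1 ↔
        ∃ a : Aˣ, f = Units.map (Polynomial.C (R := A)).toMonoidHom a ∧
          g = Units.map (Polynomial.C (R := A)).toMonoidHom a) := by
  refine ⟨fun a b hab ↦ Units.map_injective Polynomial.C_injective (congr_arg Prod.fst hab),
    fun f g ↦ ?_⟩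
  rw [mul_inv_eq_one, Units.ext_iff]
  simp only [Units.coe_map, RingHom.toMonoidHom_eq_coe, MonoidHom.coe_coe, toLaurentInv_apply,
    Polynomial.toLaurent_eq_invert_toLaurent_iff]
  constructor
  · rintro ⟨a, hf, hg⟩
    obtain ⟨u, rfl⟩ := Polynomial.isUnit_C.mp (hf ▸ f.isUnit)
    exact ⟨u, Units.ext hf, Units.ext hg⟩
  · rintro ⟨u, rfl, rfl⟩
    exact ⟨u, rfl, rfl⟩
end

section
/- The composition of anodal ring extensions is anodal: if A ⊆ B is anodal and B ⊆ C is anodal, then A ⊆ C is anodal. -/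
/-- the composition of anodal extensions is anodal. Here an extension
`A ⊆ B` is anodal if every `b ∈ B` with `b² − b ∈ A` and `b³ − b² ∈ A` lies in `A`. -/
theorem stmt_13 {C : Type} [CommRing C] (A B : Subring C) (hAB : A ≤ B)
    (hB : ∀ b ∈ B, b ^ 2 - b ∈ A → b ^ 3 - b ^ 2 ∈ A → b ∈ A)
    (hC : ∀ c : C, c ^ 2 - c ∈ B → c ^ 3 - c ^ 2 ∈ B → c ∈ B) :
    ∀ c : C, c ^ 2 - c ∈ A → c ^ 3 - c ^ 2 ∈ A → c ∈ A :=
  fun c hsq hcube => hB c (hC c (hAB hsq) (hAB hcube)) hsq hcube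
end

section
/- Let A ⊆ B be an extension of commutative rings with N𝓘(A,B) = 0 (where N𝓘(A,B) is the kernel of the map 𝓘(A[t],B[t]) → 𝓘(A,B) induced by t ↦ 1). Then A is seminormal in B: for every b ∈ B with b², b³ ∈ A, one has b ∈ A. -/
/-!
Given `b` with `b², b³ ∈ A`, put `c = b (t - 1) ∈ B[t]`. Since `c²` and `c³` (hence all `cⁿ`,
`n ≥ 2`) lie in `A[t]`, the `A[t]`-submodule `M = ⟨1 - c, c², c³⟩` of `B[t]` is invertible with
inverse `⟨1 + c, c², c³⟩`, and `t ↦ 1` maps it onto `A`. So `M` lies in `N𝓘(A,B) = 0`, i.e.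
`M = A[t]`; then `1 - c ∈ A[t]`, and its coefficient of `t` is `-b`.
-/

open Polynomial Pointwise

theorem Submonoid.pow_mem_of_sq_mem_of_pow_three_mem {M : Type*} [Monoid M] {T : Submonoid M}
    {c : M} (h2 : c ^ 2 ∈ T) (h3 : c ^ 3 ∈ T) : ∀ {n : ℕ}, 2 ≤ n → c ^ n ∈ T
  | 2, _ => h2
  | 3, _ => h3
  | n + 4, _ => by
    rw [pow_add c (n + 2) 2]
    exact mul_mem (pow_mem_of_sq_mem_of_pow_three_mem h2 h3 (by omega)) h2

section
variable {R S : Type*} [CommRing R] [CommRing S] [Algebra R S] {c : S}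

theorem Submodule.pow_mem_one_of_sq_mem_of_pow_three_mem (h2 : c ^ 2 ∈ (1 : Submodule R S))
    (h3 : c ^ 3 ∈ (1 : Submodule R S)) {n : ℕ} (hn : 2 ≤ n) : c ^ n ∈ (1 : Submodule R S) := by
  rw [← Algebra.toSubmodule_bot] at *
  exact Submonoid.pow_mem_of_sq_mem_of_pow_three_mem (T := (⊥ : Subalgebra R S).toSubmonoid)
    h2 h3 hn

theorem Submodule.span_mul_span_eq_one_of_sq_mem_of_pow_three_mem
    (h2 : c ^ 2 ∈ (1 : Submodule R S)) (h3 : c ^ 3 ∈ (1 : Submodule R S)) :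
    span R {1 - c, c ^ 2, c ^ 3} * span R {1 + c, c ^ 2, c ^ 3} = 1 := by
  have hpow {n : ℕ} (hn : 2 ≤ n) : c ^ n ∈ (1 : Submodule R S) :=
    pow_mem_one_of_sq_mem_of_pow_three_mem h2 h3 hn
  have h1 : (1 : S) ∈ (1 : Submodule R S) := one_le.mp le_rfl
  set s : Set S := {1 - c, c ^ 2, c ^ 3}
  set t : Set S := {1 + c, c ^ 2, c ^ 3}
  rw [span_mul_span]
  apply le_antisymm
  · rw [span_le, Set.mul_subset_iff]
    intro x hx y hy
    simp only [s, t, Set.mem_insert_iff, Set.mem_singleton_iff] at hx hy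
    rcases hx with rfl | rfl | rfl <;> rcases hy with rfl | rfl | rfl
    · rw [show (1 - c) * (1 + c) = 1 - c ^ 2 by ring]; exact sub_mem h1 h2
    · rw [show (1 - c) * c ^ 2 = c ^ 2 - c ^ 3 by ring]; exact sub_mem h2 h3
    · rw [show (1 - c) * c ^ 3 = c ^ 3 - c ^ 4 by ring]; exact sub_mem h3 (hpow le_add_self)
    · rw [show c ^ 2 * (1 + c) = c ^ 2 + c ^ 3 by ring]; exact add_mem h2 h3
    · rw [← pow_add]; exact hpow le_add_self
    · rw [← pow_add]; exact hpow le_add_self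
    · rw [show c ^ 3 * (1 + c) = c ^ 3 + c ^ 4 by ring]; exact add_mem h3 (hpow le_add_self)
    · rw [← pow_add]; exact hpow le_add_self
    · rw [← pow_add]; exact hpow le_add_self
  · have hmem {x y : S} (hx : x ∈ s) (hy : y ∈ t) : x * y ∈ span R (s * t) :=
      subset_span (Set.mul_mem_mul hx hy)
    rw [one_le, show (1 : S) = (1 - c) * (1 + c) + c ^ 2 * (1 + c) - (1 - c) * c ^ 3 - c ^ 2 * c ^ 2
      by ring]
    refine sub_mem (sub_mem (add_mem (hmem ?_ ?_) (hmem ?_ ?_)) (hmem ?_ ?_)) (hmem ?_ ?_) <;>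
      simp [s, t]

end

namespace Subring

variable {B : Type*} [CommRing B] (A : Subring B)

noncomputable abbrev polynomialAlgebra : Algebra A[X] B[X] := (mapRingHom A.subtype).toAlgebra

attribute [local instance] polynomialAlgebra

variable {A}

theorem polynomial_algebraMap_apply (p : A[X]) : algebraMap A[X] B[X] p = p.map A.subtype := rfl

theorem coeff_mem_of_mem_one {q : B[X]} (hq : q ∈ (1 : Submodule A[X] B[X])) (n : ℕ) :
    q.coeff n ∈ A := by
  obtain ⟨p, rfl⟩ := Submodule.mem_one.mp hq
  simp [polynomial_algebraMap_apply]

theorem C_mul_map_pow_mem_one {b : B} {k : ℕ} (hb : b ^ k ∈ A) (p : A[X]) :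
    (C b * p.map A.subtype) ^ k ∈ (1 : Submodule A[X] B[X]) :=
  Submodule.mem_one.mpr ⟨C ⟨b ^ k, hb⟩ * p ^ k, by simp [polynomial_algebraMap_apply, mul_pow]⟩

theorem eval_mem_of_mem_span {s : Set B[X]} (a : A) (hs : ∀ p ∈ s, p.eval (a : B) ∈ A) {q : B[X]}
    (hq : q ∈ Submodule.span A[X] s) : q.eval (a : B) ∈ A := by
  induction hq using Submodule.span_induction with
  | mem p hp => exact hs p hp
  | zero => simp
  | add p q _ _ hp hq => simpa using add_mem hp hq
  | smul r p _ hp =>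
    rw [Algebra.smul_def, polynomial_algebraMap_apply, eval_mul, eval_map]
    exact mul_mem (eval₂_at_apply A.subtype a ▸ SetLike.coe_mem _) hp

theorem span_eval_image_span_eq_one {s : Set B[X]} (a : A) (hs : ∀ p ∈ s, p.eval (a : B) ∈ A)
    (hs₁ : ∃ p ∈ s, p.eval (a : B) = 1) :
    Submodule.span A ((fun p : B[X] => p.eval (a : B)) '' (Submodule.span A[X] s : Set B[X])) =
      1 := by
  apply le_antisymm
  · rw [Submodule.span_le]
    rintro _ ⟨q, hq, rfl⟩
    exact Submodule.mem_one.mpr ⟨⟨_, eval_mem_of_mem_span a hs hq⟩, rfl⟩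
  · obtain ⟨p, hp, hp₁⟩ := hs₁
    rw [Submodule.one_le, ← hp₁]
    exact Submodule.subset_span ⟨p, Submodule.subset_span hp, rfl⟩

end Subring

/-- let `A ⊆ B` be a commutative ring extension with `N𝓘(A,B) = 0`,
i.e. the homomorphism `𝓘(A[t],B[t]) → 𝓘(A,B)` induced by `t ↦ 1` has trivial kernel.
Then `A` is seminormal in `B`: every `b ∈ B` with `b² ∈ A` and `b³ ∈ A` lies in `A`. -/
theorem stmt_15 {B : Type} [CommRing B] (A : Subring B) :
    (letI : Algebra (Polynomial A) (Polynomial B) :=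
      (Polynomial.mapRingHom A.subtype).toAlgebra
    ∀ M : (Submodule (Polynomial A) (Polynomial B))ˣ,
      Submodule.span A
          ((fun p : Polynomial B => p.eval 1) ''
            ((M : Submodule (Polynomial A) (Polynomial B)) : Set (Polynomial B))) =
        (1 : Submodule A B) →
      (M : Submodule (Polynomial A) (Polynomial B)) = 1) →
    ∀ b : B, b ^ 2 ∈ A → b ^ 3 ∈ A → b ∈ A := by
  let := A.polynomialAlgebra
  intro hN b hb2 hb3
  set c : B[X] := C b * (X - 1 : A[X]).map A.subtype
  have hc2 : c ^ 2 ∈ (1 : Submodule A[X] B[X]) := Subring.C_mul_map_pow_mem_one hb2 _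
  have hc3 : c ^ 3 ∈ (1 : Submodule A[X] B[X]) := Subring.C_mul_map_pow_mem_one hb3 _
  have hMN := Submodule.span_mul_span_eq_one_of_sq_mem_of_pow_three_mem hc2 hc3
  have hM := hN (.mkOfMulEqOne _ _ hMN) <|
    Subring.span_eval_image_span_eq_one 1 (by simp [c]) ⟨1 - c, by simp [c]⟩
  have hc : 1 - c ∈ (1 : Submodule A[X] B[X]) := by
    rw [← hM]
    exact Submodule.subset_span (by simp)
  simpa [c, coeff_one] using Subring.coeff_mem_of_mem_one hc 1
end

section
/- Let A ⊆ B be an extension of commutative rings and set Unil(A⊆B) = Unil(B)/Unil(A), where Unil(R) = 1 + nil(R). Then the natural map Unil(B[t])/Unil(A[t]) → Unil(B)/Unil(A) induced by t ↦ 1 has trivial kernel if and only if nil(A) = nil(B) (equivalently, nil(B) ⊆ A). -/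
/-!
A nilpotent `b ∈ B` outside `A` yields the polynomial `1 + b (t - t²)`: it lies in
`Unil(B[t])` and evaluates to `1` at `t = 1`, yet its `t`-coefficient `b` is not in `A`.
-/

open Polynomial

namespace Polynomial

theorem coeff_C_mul_mem_of_mem {R : Type*} [CommSemiring R] {I : Ideal R} {b : R}
    (hb : b ∈ I) (p : R[X]) (n : ℕ) : (C b * p).coeff n ∈ I := by
  rw [coeff_C_mul]
  exact I.mul_mem_right _ hb

variable {R : Type*} [CommRing R]

theorem eval_one_C_mul_X_sub_X_sq (b : R) : (C b * (X - X ^ 2)).eval 1 = 0 := by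
  simp

theorem coeff_one_C_mul_X_sub_X_sq (b : R) : (C b * (X - X ^ 2)).coeff 1 = b := by
  simp [coeff_X, coeff_X_pow]

end Polynomial

/-- for a commutative ring extension `A ⊆ B`, the natural map
`Unil(B[t])/Unil(A[t]) → Unil(B)/Unil(A)` induced by `t ↦ 1` has trivial kernel if and
only if `nil(A) = nil(B)`, i.e. `nil(B) ⊆ A`.  Here `Unil(R) = 1 + nil(R)` and an
element of `Unil(B[t])` is a polynomial `p` with `p − 1` nilpotent coefficientwise;
its class is trivial in the target iff `p.eval 1 ∈ 1 + nil(A)`, and it is trivial in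
the source iff all coefficients of `p − 1` lie in `A` (hence in `nil(A)`). -/
theorem stmt_17 {B : Type} [CommRing B] (A : Subring B) :
    (∀ p : Polynomial B, (∀ n, (p - 1).coeff n ∈ nilradical B) →
        p.eval 1 - 1 ∈ A → ∀ n, (p - 1).coeff n ∈ A) ↔
      (∀ b ∈ nilradical B, b ∈ A) := by
  constructor
  · intro h b hb
    set p : B[X] := 1 + C b * (X - X ^ 2)
    have hp : p - 1 = C b * (X - X ^ 2) := add_sub_cancel_left _ _
    have hunil : ∀ n, (p - 1).coeff n ∈ nilradical B :=
      fun n => hp ▸ coeff_C_mul_mem_of_mem hb _ n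
    have heval : p.eval 1 - 1 ∈ A := by
      rw [eval_add, eval_one, eval_one_C_mul_X_sub_X_sq, add_zero, sub_self]
      exact A.zero_mem
    simpa only [hp, coeff_one_C_mul_X_sub_X_sq] using h p hunil heval 1
  · intro h p hp _ n
    exact h _ (hp n)
end

section
/- Let A ⊆ B ⊆ C be extensions of commutative rings, and suppose L is an invertible A-submodule of C contained in B. Then the inverse A-submodule L⁻¹ (the A-submodule M of C with L·M = A) need not be contained in B in general; however, if additionally L·(B ∩ L⁻¹) = A, then L is an invertible A-submodule of B. In particular, the image of 𝓘(A,B) → 𝓘(A,C) consists exactly of those invertible A-submodules L of C with both L ⊆ B and L⁻¹ ⊆ B. -/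
/-! If `L` and `L⁻¹` both lie in `B`, their preimages in `B` are mutually inverse, since
`map` along the injective inclusion `B → C` is multiplicative. The hypothesis
`L·(B ∩ L⁻¹) = A` forces `B ∩ L⁻¹ = L⁻¹` by uniqueness of inverses. For `ℤ ⊆ ℤ ⊆ ℚ`, the
invertible `L = 2ℤ` lies in `ℤ` but `L⁻¹ = ½ℤ` does not. -/

open Submodule

theorem Units.inv_le_of_mul_inf_eq_one {M : Type*} [Monoid M] [SemilatticeInf M] {u : Mˣ} {N : M}
    (h : u * (N ⊓ ↑u⁻¹) = 1) : (↑u⁻¹ : M) ≤ N :=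
  Units.inv_eq_of_mul_eq_one_right h ▸ inf_le_left

theorem Subring.coe_span_subset {C : Type*} [CommRing C] {A B : Subring C} (hAB : A ≤ B)
    {s : Set C} (hs : s ⊆ B) : (span A s : Set C) ⊆ B :=
  span_le (p := Subalgebra.toSubmodule { B with algebraMap_mem' := fun a => hAB a.2 }) |>.mpr hs

theorem Submodule.exists_units_map_eq_iff {R A B : Type*} [CommSemiring R] [CommSemiring A]
    [CommSemiring B] [Algebra R A] [Algebra R B] (f : A →ₐ[R] B) (hf : Function.Injective f)
    (L : (Submodule R B)ˣ) :
    (∃ M : (Submodule R A)ˣ, map f.toLinearMap M = L) ↔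
      (L : Submodule R B) ≤ LinearMap.range f.toLinearMap ∧
        ((L⁻¹ : (Submodule R B)ˣ) : Submodule R B) ≤ LinearMap.range f.toLinearMap := by
  constructor
  · rintro ⟨M, hM⟩
    obtain rfl : Units.map (mapHom f).toMonoidHom M = L := Units.ext hM
    exact ⟨LinearMap.map_le_range, LinearMap.map_le_range⟩
  · rintro ⟨hL, hLinv⟩
    have hmul : comap f.toLinearMap L * comap f.toLinearMap ↑L⁻¹ = 1 := by
      apply map_injective_of_injective (f := f.toLinearMap) hf
      rw [Submodule.map_mul _ _ f, map_comap_eq_self hL, map_comap_eq_self hLinv,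
        Submodule.map_one f, Units.mul_inv]
    exact ⟨⟨_, _, hmul, by rwa [mul_comm] at hmul⟩, map_comap_eq_self hL⟩

theorem exists_units_submodule_int_rat_inv_not_subset :
    ∃ L : (Submodule (⊥ : Subring ℚ) ℚ)ˣ,
      ((L : Submodule (⊥ : Subring ℚ) ℚ) : Set ℚ) ⊆ (⊥ : Subring ℚ) ∧
      ¬ (((L⁻¹ : (Submodule (⊥ : Subring ℚ) ℚ)ˣ) : Submodule (⊥ : Subring ℚ) ℚ) : Set ℚ) ⊆
        (⊥ : Subring ℚ) := by
  refine ⟨Units.map (spanSingleton (⊥ : Subring ℚ)).toMonoidHom (Units.mk0 2 two_ne_zero), ?_, ?_⟩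
  · exact Subring.coe_span_subset le_rfl (Set.singleton_subset_iff.2 ⟨2, by norm_num⟩)
  · intro h
    obtain ⟨n, hn⟩ := Subring.mem_bot.1 (h (mem_span_singleton_self (2⁻¹ : ℚ)))
    have : n * 2 = 1 := Int.cast_injective (α := ℚ) (by push_cast [hn]; norm_num)
    omega

/-- let `A ⊆ B ⊆ C` be extensions of commutative rings and `L` an
invertible `A`-submodule of `C` contained in `B`.
(i) The inverse `L⁻¹` need not be contained in `B` in general;
(ii) however, if additionally `L·(B ∩ L⁻¹) = A`, then `L` is an invertible
`A`-submodule of `B`;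
(iii) in particular, the image of `𝓘(A,B) → 𝓘(A,C)` consists exactly of those
invertible `A`-submodules `L` of `C` with `L ⊆ B` and `L⁻¹ ⊆ B`. -/
theorem stmt_19 {C : Type} [CommRing C] (A B : Subring C) (hAB : A ≤ B) :
    letI : Algebra A B := (Subring.inclusion hAB).toAlgebra
    (¬ ∀ (C₀ : Type) [CommRing C₀] (A₀ B₀ : Subring C₀), A₀ ≤ B₀ →
        ∀ L : (Submodule A₀ C₀)ˣ,
          ((L : Submodule A₀ C₀) : Set C₀) ⊆ (B₀ : Set C₀) →
          (((L⁻¹ : (Submodule A₀ C₀)ˣ) : Submodule A₀ C₀) : Set C₀) ⊆ (B₀ : Set C₀)) ∧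
    (∀ L : (Submodule A C)ˣ,
        ((L : Submodule A C) : Set C) ⊆ (B : Set C) →
        (L : Submodule A C) *
            (Submodule.span A (B : Set C) ⊓
              ((L⁻¹ : (Submodule A C)ˣ) : Submodule A C)) = 1 →
        ∃ M : (Submodule A B)ˣ,
          ((L : Submodule A C) : Set C) =
            Subtype.val '' ((M : Submodule A B) : Set B)) ∧
    (∀ L : (Submodule A C)ˣ,
        (∃ M : (Submodule A B)ˣ,
            ((L : Submodule A C) : Set C) =
              Subtype.val '' ((M : Submodule A B) : Set B)) ↔
          (((L : Submodule A C) : Set C) ⊆ (B : Set C) ∧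
            (((L⁻¹ : (Submodule A C)ˣ) : Submodule A C) : Set C) ⊆ (B : Set C))) := by
  let : Algebra A B := (Subring.inclusion hAB).toAlgebra
  let f : B →ₐ[A] C := { toRingHom := B.subtype, commutes' := fun _ => rfl }
  have subset_iff_le_range (N : Submodule A C) :
      (N : Set C) ⊆ B ↔ N ≤ LinearMap.range f.toLinearMap := by
    refine ⟨fun h x hx => ⟨⟨x, h hx⟩, rfl⟩, fun h x hx => ?_⟩
    obtain ⟨y, rfl⟩ := h hx
    exact y.2
  have image_iff (L : (Submodule A C)ˣ) :
      (∃ M : (Submodule A B)ˣ, ((L : Submodule A C) : Set C) = Subtype.val '' (M : Set B)) ↔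
        (L : Set C) ⊆ B ∧ ((L⁻¹ : (Submodule A C)ˣ) : Set C) ⊆ B := by
    simp_rw [subset_iff_le_range, ← exists_units_map_eq_iff f Subtype.val_injective L, eq_comm,
      ← SetLike.coe_set_eq, map_coe]
    rfl
  refine ⟨fun h => ?_, fun L hL hmul => (image_iff L).2 ⟨hL, ?_⟩, image_iff⟩
  · obtain ⟨L, hL, hLinv⟩ := exists_units_submodule_int_rat_inv_not_subset
    exact hLinv (h ℚ ⊥ ⊥ le_rfl L hL)
  · exact (Subring.coe_span_subset hAB subset_rfl).trans' (Units.inv_le_of_mul_inf_eq_one hmul)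
end
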